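/- Let p > q ≥ 1 be coprime integers with p/q = [a_1,…,a_h], where a_1,…,a_h ≥ 5, and write p/(p−q) = [b_1,…,b_k] with b_1,…,b_k ≥ 2. Then k ≥ 4; b_i ≤ 3 for every i = 1,…,k; and whenever b_i = b_j = 3, either i = j with 3 < i < k−2, or |i−j| ≥ 3. -/

import Mathlib

/-- The continued fraction `[n_1, …, n_k] = n_1 - 1/(n_2 - 1/(… - 1/n_k))`,
computed by the backwards recursion `t_k = n_k`, `t_i = n_i - 1/t_{i+1}`. -/
def cf : List ℚ → ℚ
  | [] => 0
  | [a] => a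
  | a :: b :: l => a - 1 / cf (b :: l)

/-- The continued fraction of a tuple of integers. -/
def cfI (l : List ℤ) : ℚ := cf (l.map (fun n => (n : ℚ)))

lemma cfI_eq (l : List ℤ) : cfI l = cf (l.map (fun n : ℤ => (n:ℚ))) := by
  unfold cfI
  congr 1
  induction l with
  | nil => rfl
  | cons a t ih => simpa using ih

lemma cf_cons (a : ℚ) (l : List ℚ) (hl : l ≠ []) : cf (a :: l) = a - 1 / cf l := by
  cases l with
  | nil => exact absurd rfl hl
  | cons b t => rfl

lemma cfI_cons (a : ℤ) (l : List ℤ) (hl : l ≠ []) : cfI (a :: l) = a - 1 / cfI l := by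
  rw [cfI_eq, cfI_eq, List.map_cons, cf_cons]
  simpa using hl

lemma cfI_singleton (a : ℤ) : cfI [a] = a := by rw [cfI_eq]; rfl

lemma cf_one_lt : ∀ l : List ℚ, l ≠ [] → (∀ x ∈ l, 2 ≤ x) → 1 < cf l := by
  intro l
  induction l with
  | nil => intro h; exact absurd rfl h
  | cons a t ih =>
    intro _ h
    cases t with
    | nil =>
      have := h a (by simp)
      simpa [cf] using by linarith
    | cons b t' =>
      have ht : 1 < cf (b :: t') := ih (by simp) (fun x hx => h x (by simp [hx]))
      have ha : (2:ℚ) ≤ a := h a (by simp)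
      rw [cf_cons a _ (by simp)]
      have h1 : 0 < 1 / cf (b :: t') := by positivity
      have h2 : 1 / cf (b :: t') < 1 := by
        rw [div_lt_one (by linarith)]; linarith
      linarith

lemma cfI_one_lt (l : List ℤ) (hne : l ≠ []) (h : ∀ x ∈ l, 2 ≤ x) : 1 < cfI l := by
  rw [cfI_eq]
  apply cf_one_lt _ (by simp [hne])
  intro x hx
  simp only [List.mem_map] at hx
  obtain ⟨n, hn, hnx⟩ := hx
  rw [← hnx]
  exact_mod_cast h n hn

lemma cfI_bounds (a : ℤ) (l : List ℤ) (hne : l ≠ []) (h : ∀ x ∈ l, 2 ≤ x) :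
    (a:ℚ) - 1 < cfI (a::l) ∧ cfI (a::l) < a := by
  have ht := cfI_one_lt l hne h
  rw [cfI_cons a l hne]
  have h1 : 0 < 1 / cfI l := by positivity
  have h2 : 1 / cfI l < 1 := by rw [div_lt_one (by linarith)]; linarith
  constructor <;> linarith

lemma cfI_unique : ∀ l₁ l₂ : List ℤ, (∀ x ∈ l₁, 2 ≤ x) → (∀ x ∈ l₂, 2 ≤ x) →
    cfI l₁ = cfI l₂ → l₁ = l₂ := by
  intro l₁
  induction l₁ with
  | nil =>
    intro l₂ _ h₂ he
    cases l₂ with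
    | nil => rfl
    | cons b t =>
      exfalso
      have := cfI_one_lt (b :: t) (by simp) h₂
      have h0 : cfI ([] : List ℤ) = 0 := rfl
      rw [h0] at he; linarith
  | cons a t ih =>
    intro l₂ h₁ h₂ he
    cases l₂ with
    | nil =>
      exfalso
      have := cfI_one_lt (a :: t) (by simp) h₁
      have h0 : cfI ([] : List ℤ) = 0 := rfl
      rw [h0] at he; linarith
    | cons b s =>
      have hat : ∀ x ∈ t, 2 ≤ x := fun x hx => h₁ x (by simp [hx])
      have hbs : ∀ x ∈ s, 2 ≤ x := fun x hx => h₂ x (by simp [hx])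
      -- determine heads
      have hab : a = b := by
        rcases eq_or_ne t [] with rfl | ht <;> rcases eq_or_ne s [] with rfl | hs
        · have : ((a:ℚ)) = b := by
            rw [cfI_singleton, cfI_singleton] at he; exact he
          exact_mod_cast this
        · exfalso
          obtain ⟨hb1, hb2⟩ := cfI_bounds b s hs hbs
          rw [cfI_singleton] at he
          rw [← he] at hb1 hb2
          have : (b:ℚ) - 1 < a := hb1
          have h3 : b - 1 < a := by exact_mod_cast this
          have h4 : a < b := by exact_mod_cast hb2
          omega
        · exfalso
          obtain ⟨hb1, hb2⟩ := cfI_bounds a t ht hat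
          rw [cfI_singleton] at he
          rw [he] at hb1 hb2
          have h3 : a - 1 < b := by exact_mod_cast hb1
          have h4 : b < a := by exact_mod_cast hb2
          omega
        · obtain ⟨ha1, ha2⟩ := cfI_bounds a t ht hat
          obtain ⟨hb1, hb2⟩ := cfI_bounds b s hs hbs
          rw [he] at ha1 ha2
          have h3 : (a:ℚ) - 1 < b := by linarith
          have h4 : (b:ℚ) - 1 < a := by linarith
          have h5 : a - 1 < b := by exact_mod_cast h3
          have h6 : b - 1 < a := by exact_mod_cast h4
          omega
      subst hab
      rcases eq_or_ne t [] with rfl | ht <;> rcases eq_or_ne s [] with rfl | hs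
      · rfl
      · exfalso
        obtain ⟨hb1, hb2⟩ := cfI_bounds a s hs hbs
        rw [cfI_singleton] at he
        rw [← he] at hb2; linarith
      · exfalso
        obtain ⟨hb1, hb2⟩ := cfI_bounds a t ht hat
        rw [cfI_singleton] at he
        rw [he] at hb2; linarith
      · have h1 := cfI_one_lt t ht hat
        have h2 := cfI_one_lt s hs hbs
        rw [cfI_cons a t ht, cfI_cons a s hs] at he
        have : (1:ℚ) / cfI t = 1 / cfI s := by linarith
        have hts : cfI t = cfI s := by
          field_simp at this
          exact this.symm
        rw [ih s hat hbs hts]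

lemma cf_replicate (n : ℕ) (l : List ℚ) (hl : l ≠ []) (h : 1 < cf l) :
    cf (List.replicate n 2 ++ l) = ((n+1) * cf l - n) / (n * cf l - n + 1) ∧
      1 < cf (List.replicate n 2 ++ l) := by
  induction n with
  | zero =>
    simp only [List.replicate, List.nil_append, Nat.cast_zero]
    constructor
    · norm_num
    · exact h
  | succ n ih =>
    obtain ⟨ihv, ihlt⟩ := ih
    set t := cf l with ht
    have hne : List.replicate n (2:ℚ) ++ l ≠ [] := by
      simp [hl]
    have hrep : List.replicate (n+1) (2:ℚ) ++ l = 2 :: (List.replicate n 2 ++ l) := by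
      simp [List.replicate_succ]
    rw [hrep, cf_cons _ _ hne, ihv]
    set v := ((n:ℚ)+1) * t - n with hv
    set d := (n:ℚ) * t - n + 1 with hd
    have hdpos : 0 < d := by
      have : d = n * (t - 1) + 1 := by ring
      rw [this]
      have : (0:ℚ) ≤ n * (t-1) := by
        apply mul_nonneg (by positivity)
        linarith
      linarith
    have hvd : d < v := by
      have : v - d = t - 1 := by ring
      linarith
    have hvpos : 0 < v := lt_trans hdpos hvd
    have key : 2 - 1 / (v / d) = ((2:ℚ) * v - d) / v := by
      rw [one_div_div]
      field_simp
    rw [key]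
    constructor
    · push_cast
      rw [hv, hd]
      have h2 : ((n:ℚ)+1) * t - n ≠ 0 := ne_of_gt hvpos
      have h3 : ((n:ℚ)+1) * t - ((n:ℚ)+1) + 1 ≠ 0 := by
        have hn0 : (0:ℚ) ≤ (n:ℚ) := Nat.cast_nonneg n
        nlinarith
      rw [div_eq_div_iff]
      · ring
      · assumption
      · assumption
    · rw [lt_div_iff₀ hvpos, one_mul]
      rw [hv, hd]
      nlinarith

def dgo : List ℤ → List ℤ
  | [] => [2]
  | a :: l => 3 :: (List.replicate (a-3).toNat 2 ++ dgo l)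

def dual : List ℤ → List ℤ
  | [] => []
  | a :: l => List.replicate (a-2).toNat 2 ++ dgo l

lemma dgo_ne_nil (l : List ℤ) : dgo l ≠ [] := by
  cases l <;> simp [dgo]

lemma cfI_rep_append (n : ℕ) (l : List ℤ) :
    cfI (List.replicate n 2 ++ l) = cf (List.replicate n (2:ℚ) ++ l.map (fun k : ℤ => (k:ℚ))) := by
  rw [cfI_eq]
  congr 1
  simp

lemma dgo_cf : ∀ l : List ℤ, (∀ x ∈ l, 5 ≤ x) →
    1 < cfI (dgo l) ∧
    ((l = [] → cfI (dgo l) = 2) ∧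
     (l ≠ [] → cfI (dgo l) = (2 * cfI l - 1) / (cfI l - 1))) := by
  intro l
  induction l with
  | nil =>
    intro _
    refine ⟨?_, fun _ => ?_, fun hc => absurd rfl hc⟩ <;>
      simp [dgo, cfI_singleton]
  | cons a s ih =>
    intro h
    have ha : 5 ≤ a := h a (by simp)
    have hs : ∀ x ∈ s, 5 ≤ x := fun x hx => h x (by simp [hx])
    obtain ⟨iht, ihnil, ihcons⟩ := ih hs
    set m := (a - 3).toNat with hm
    have hmcast : ((m:ℤ):ℚ) = (a:ℚ) - 3 := by
      rw [hm, Int.toNat_of_nonneg (by omega)]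
      push_cast; ring
    have hmq : ((m:ℕ):ℚ) = (a:ℚ) - 3 := by
      rw [← hmcast]; push_cast; ring
    -- value of the middle block
    have hrep := cf_replicate m ((dgo s).map (fun k : ℤ => (k:ℚ)))
      (by simp [dgo_ne_nil]) (by rw [← cfI_eq]; exact iht)
    rw [← cfI_eq, ← cfI_rep_append] at hrep
    obtain ⟨hrv, hrlt⟩ := hrep
    have hdgo : dgo (a :: s) = 3 :: (List.replicate m 2 ++ dgo s) := rfl
    have hne : List.replicate m (2:ℤ) ++ dgo s ≠ [] := by simp [dgo_ne_nil]
    have hval : cfI (dgo (a :: s)) = 3 - 1 / cfI (List.replicate m 2 ++ dgo s) := by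
      rw [hdgo, cfI_cons _ _ hne]
      norm_num
    have hmid_lt : 1 < cfI (List.replicate m 2 ++ dgo s) := hrlt
    have hlt : 1 < cfI (dgo (a :: s)) := by
      rw [hval]
      have h1 : 0 < 1 / cfI (List.replicate m 2 ++ dgo s) := by positivity
      have h2 : 1 / cfI (List.replicate m 2 ++ dgo s) < 1 := by
        rw [div_lt_one (by linarith)]; linarith
      linarith
    refine ⟨hlt, fun hc => by simp at hc, fun _ => ?_⟩
    rw [hval, hrv, hmq]
    rcases eq_or_ne s [] with rfl | hsne
    · -- s empty : t = 2, Y = a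
      rw [ihnil rfl]
      rw [cfI_singleton]
      have haq : (5:ℚ) ≤ (a:ℚ) := by exact_mod_cast ha
      have d1 : ((a:ℚ) - 3 + 1) * 2 - ((a:ℚ)-3) ≠ 0 := by nlinarith
      have d2 : ((a:ℚ) - 3) * 2 - ((a:ℚ)-3) + 1 ≠ 0 := by nlinarith
      have d3 : (a:ℚ) - 1 ≠ 0 := by nlinarith
      field_simp
      ring
    · -- s nonempty
      have hy : 1 < cfI s := cfI_one_lt s hsne (fun x hx => by have := hs x hx; omega)
      set y := cfI s with hyy
      rw [ihcons hsne]
      rw [cfI_cons a s hsne]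
      have haq : (5:ℚ) ≤ (a:ℚ) := by exact_mod_cast ha
      have e1 : y - 1 ≠ 0 := by linarith
      have e0 : y ≠ 0 := by linarith
      have t2 : (2*y-1)/(y-1) = 2 + 1/(y-1) := by field_simp; ring
      have htlt : 1 < (2*y-1)/(y-1) := by
        rw [t2]
        have : 0 < 1/(y-1) := by apply div_pos one_pos; linarith
        linarith
      set t := (2*y-1)/(y-1) with htt
      have d2 : ((a:ℚ)-3) * t - ((a:ℚ)-3) + 1 ≠ 0 := by
        have : ((a:ℚ)-3) * t - ((a:ℚ)-3) + 1 = ((a:ℚ)-3)*(t-1)+1 := by ring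
        rw [this]
        have : (0:ℚ) ≤ ((a:ℚ)-3)*(t-1) := mul_nonneg (by linarith) (by linarith)
        linarith
      have d1 : ((a:ℚ)-3+1) * t - ((a:ℚ)-3) ≠ 0 := by
        have hd2 : (0:ℚ) < ((a:ℚ)-3) * t - ((a:ℚ)-3) + 1 := by
          have : ((a:ℚ)-3) * t - ((a:ℚ)-3) + 1 = ((a:ℚ)-3)*(t-1)+1 := by ring
          rw [this]
          have : (0:ℚ) ≤ ((a:ℚ)-3)*(t-1) := mul_nonneg (by linarith) (by linarith)
          linarith
        nlinarith
      have dY : (a:ℚ) - 1/y - 1 ≠ 0 := by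
        have h1 : 1/y < 1 := by rw [div_lt_one (by linarith)]; linarith
        have : 0 < (a:ℚ) - 1/y - 1 := by linarith
        linarith
      have dY' : (a:ℚ) * y - y - 1 ≠ 0 := by
        have h1 : 1/y < 1 := by rw [div_lt_one (by linarith)]; linarith
        have h2 : 0 < (a:ℚ) - 1/y - 1 := by linarith
        have : (a:ℚ)*y - y - 1 = y * ((a:ℚ) - 1/y - 1) := by field_simp; ring
        rw [this]
        exact mul_ne_zero e0 (by linarith)
      rw [htt] at d1 d2 ⊢
      have hz : (-1 + ((a:ℚ) * y - y)) ≠ 0 := fun hc => dY' (by linarith)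
      rw [← hyy]
      field_simp [dY', hz]
      have hz' : (-1 + (a:ℚ) * y - y) ≠ 0 := fun hc => dY' (by linarith)
      linear_combination (-3:ℚ) * mul_inv_cancel₀ hz'

lemma dual_cf (a₁ : ℤ) (l : List ℤ) (h : ∀ x ∈ a₁ :: l, 5 ≤ x) :
    cfI (dual (a₁ :: l)) = cfI (a₁ :: l) / (cfI (a₁ :: l) - 1) := by
  have ha : 5 ≤ a₁ := h a₁ (by simp)
  have hl : ∀ x ∈ l, 5 ≤ x := fun x hx => h x (by simp [hx])
  obtain ⟨iht, ihnil, ihcons⟩ := dgo_cf l hl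
  set n := (a₁ - 2).toNat with hn
  have hnq : ((n:ℕ):ℚ) = (a₁:ℚ) - 2 := by
    have : ((n:ℤ):ℚ) = ((a₁ - 2 : ℤ):ℚ) := by
      rw [hn, Int.toNat_of_nonneg (by omega)]
    push_cast at this
    push_cast
    linarith
  have hrep := cf_replicate n ((dgo l).map (fun k : ℤ => (k:ℚ)))
    (by simp [dgo_ne_nil]) (by rw [← cfI_eq]; exact iht)
  rw [← cfI_eq, ← cfI_rep_append] at hrep
  obtain ⟨hrv, hrlt⟩ := hrep
  have hdual : dual (a₁ :: l) = List.replicate n 2 ++ dgo l := rfl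
  rw [hdual, hrv, hnq]
  have haq : (5:ℚ) ≤ (a₁:ℚ) := by exact_mod_cast ha
  rcases eq_or_ne l [] with rfl | hlne
  · rw [ihnil rfl, cfI_singleton]
    have d1 : (a₁:ℚ) - 1 ≠ 0 := by nlinarith
    have d1' : (-1 + (a₁:ℚ)) ≠ 0 := fun hc => d1 (by linarith)
    field_simp [d1']
    linear_combination (a₁:ℚ) * mul_inv_cancel₀ d1'
  · have hy : 1 < cfI l := cfI_one_lt l hlne (fun x hx => by have := hl x hx; omega)
    set y := cfI l with hyy
    rw [ihcons hlne, cfI_cons a₁ l hlne]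
    have e1 : y - 1 ≠ 0 := by linarith
    have e0 : y ≠ 0 := by linarith
    have dY' : (a₁:ℚ) * y - y - 1 ≠ 0 := by
      have h1 : 1/y < 1 := by rw [div_lt_one (by linarith)]; linarith
      have h2 : 0 < (a₁:ℚ) - 1/y - 1 := by linarith
      have : (a₁:ℚ)*y - y - 1 = y * ((a₁:ℚ) - 1/y - 1) := by field_simp; ring
      rw [this]
      exact mul_ne_zero e0 (by linarith)
    have hz : (-1 + ((a₁:ℚ) * y - y)) ≠ 0 := fun hc => dY' (by linarith)
    set t := (2*y-1)/(y-1) with htt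
    have t2 : t = 2 + 1 / (y - 1) := by rw [htt]; field_simp; ring
    have htlt : 1 < t := by
      rw [t2]
      have : 0 < 1/(y-1) := by apply div_pos one_pos; linarith
      linarith
    have d2 : ((a₁:ℚ)-2) * t - ((a₁:ℚ)-2) + 1 ≠ 0 := by
      have he : ((a₁:ℚ)-2) * t - ((a₁:ℚ)-2) + 1 = ((a₁:ℚ)-2)*(t-1)+1 := by ring
      rw [he]
      have : (0:ℚ) ≤ ((a₁:ℚ)-2)*(t-1) := mul_nonneg (by linarith) (by linarith)
      linarith
    rw [htt] at d2 ⊢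
    rw [← hyy]
    field_simp [dY', hz]
    ring

lemma mem_dgo : ∀ l : List ℤ, ∀ x ∈ dgo l, x = 2 ∨ x = 3 := by
  intro l
  induction l with
  | nil => intro x hx; simp [dgo] at hx; exact Or.inl hx
  | cons a s ih =>
    intro x hx
    simp only [dgo, List.mem_cons, List.mem_append, List.mem_replicate] at hx
    rcases hx with rfl | ⟨_, rfl⟩ | hx
    · exact Or.inr rfl
    · exact Or.inl rfl
    · exact ih x hx

lemma mem_dual : ∀ l : List ℤ, ∀ x ∈ dual l, x = 2 ∨ x = 3 := by
  intro l x hx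
  cases l with
  | nil => simp [dual] at hx
  | cons a s =>
    simp only [dual, List.mem_append, List.mem_replicate] at hx
    rcases hx with ⟨_, rfl⟩ | hx
    · exact Or.inl rfl
    · exact mem_dgo s x hx

def SpacedP (l : List ℤ) : Prop :=
  ∀ i : ℕ, l[i]? = some 3 → l[i+1]? = some 2 ∧ l[i+2]? = some 2 ∧ i + 3 < l.length

lemma spaced_rep_append (n : ℕ) (l : List ℤ) (h : SpacedP l) :
    SpacedP (List.replicate n 2 ++ l) := by
  intro i hi
  rcases lt_or_ge i n with hin | hin
  · rw [List.getElem?_append, List.length_replicate, if_pos hin, List.getElem?_replicate,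
      if_pos hin] at hi
    exact absurd (Option.some.inj hi) (by norm_num)
  · have hlen : (List.replicate n (2:ℤ)).length = n := List.length_replicate
    rw [List.getElem?_append_right (by omega : (List.replicate n (2:ℤ)).length ≤ i)] at hi
    rw [hlen] at hi
    obtain ⟨h1, h2, h3⟩ := h (i - n) hi
    refine ⟨?_, ?_, ?_⟩
    · rw [List.getElem?_append_right (by omega : (List.replicate n (2:ℤ)).length ≤ i + 1), hlen]
      rw [show i + 1 - n = i - n + 1 by omega]
      exact h1
    · rw [List.getElem?_append_right (by omega : (List.replicate n (2:ℤ)).length ≤ i + 2), hlen]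
      rw [show i + 2 - n = i - n + 2 by omega]
      exact h2
    · rw [List.length_append, hlen]
      omega

lemma spaced_dgo : ∀ l : List ℤ, (∀ x ∈ l, 5 ≤ x) → SpacedP (dgo l) := by
  intro l
  induction l with
  | nil =>
    intro _ i hi
    match i with
    | 0 => simp [dgo] at hi
    | (k+1) => simp [dgo] at hi
  | cons a s ih =>
    intro h
    have ha : 5 ≤ a := h a (by simp)
    have hs : ∀ x ∈ s, 5 ≤ x := fun x hx => h x (by simp [hx])
    have hm : 2 ≤ (a - 3).toNat := by omega
    set m := (a-3).toNat with hmm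
    have hT : SpacedP (List.replicate m 2 ++ dgo s) := spaced_rep_append m (dgo s) (ih hs)
    have hglen : 1 ≤ (dgo s).length := by
      have := dgo_ne_nil s
      cases hg : dgo s with
      | nil => exact absurd hg this
      | cons u v => simp [hg]
    intro i hi
    have hdg : dgo (a :: s) = 3 :: (List.replicate m 2 ++ dgo s) := rfl
    rw [hdg] at hi ⊢
    match i with
    | 0 =>
      refine ⟨?_, ?_, ?_⟩
      · rw [List.getElem?_cons_succ, List.getElem?_append, List.length_replicate,
          if_pos (by omega), List.getElem?_replicate, if_pos (by omega)]
      · rw [List.getElem?_cons_succ, List.getElem?_append, List.length_replicate,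
          if_pos (by omega), List.getElem?_replicate, if_pos (by omega)]
      · simp only [List.length_cons, List.length_append, List.length_replicate]
        omega
    | (i' + 1) =>
      rw [List.getElem?_cons_succ] at hi
      obtain ⟨h1, h2, h3⟩ := hT i' hi
      refine ⟨?_, ?_, ?_⟩
      · rw [List.getElem?_cons_succ]; exact h1
      · rw [List.getElem?_cons_succ]; exact h2
      · simp only [List.length_cons]
        omega

lemma dual_spec (a₁ : ℤ) (l : List ℤ) (h : ∀ x ∈ a₁ :: l, 5 ≤ x) :
    4 ≤ (dual (a₁::l)).length ∧ SpacedP (dual (a₁::l)) ∧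
      ∀ i : ℕ, (dual (a₁::l))[i]? = some 3 → 3 ≤ i := by
  have ha : 5 ≤ a₁ := h a₁ (by simp)
  have hs : ∀ x ∈ l, 5 ≤ x := fun x hx => h x (by simp [hx])
  have hn : 3 ≤ (a₁ - 2).toNat := by omega
  set n := (a₁ - 2).toNat with hnn
  have hdual : dual (a₁ :: l) = List.replicate n 2 ++ dgo l := rfl
  have hglen : 1 ≤ (dgo l).length := by
    have := dgo_ne_nil l
    cases hg : dgo l with
    | nil => exact absurd hg this
    | cons u v => simp [hg]
  refine ⟨?_, ?_, ?_⟩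
  · rw [hdual, List.length_append, List.length_replicate]
    omega
  · rw [hdual]
    exact spaced_rep_append n (dgo l) (spaced_dgo l hs)
  · intro i hi
    rw [hdual] at hi
    rcases lt_or_ge i n with hin | hin
    · rw [List.getElem?_append, List.length_replicate, if_pos hin, List.getElem?_replicate,
        if_pos hin] at hi
      exact absurd (Option.some.inj hi) (by norm_num)
    · omega

/-- Let `p > q ≥ 1` be coprime integers with `p/q = [a_1, …, a_h]`, all `a_i ≥ 5`, and
`p/(p-q) = [b_1, …, b_k]`, all `b_i ≥ 2`.  Then `k ≥ 4`, `b_i ≤ 3` for every `i`, and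
whenever `b_i = b_j = 3` either `i = j` with `3 < i < k - 2` (one-based indexing), or
`|i - j| ≥ 3`. -/
theorem stmt6 (p q : ℤ) (hq : 1 ≤ q) (hqp : q < p) (hcop : IsCoprime p q)
    (a : List ℤ) (ha : ∀ x ∈ a, 5 ≤ x) (hacf : cfI a = (p : ℚ) / (q : ℚ))
    (b : List ℤ) (hb : ∀ x ∈ b, 2 ≤ x) (hbcf : cfI b = (p : ℚ) / ((p : ℚ) - (q : ℚ))) :
    4 ≤ b.length ∧ (∀ x ∈ b, x ≤ 3) ∧
      ∀ i j : Fin b.length, b.get i = 3 → b.get j = 3 →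
        (i = j ∧ 3 < (i : ℕ) + 1 ∧ (i : ℕ) + 3 < b.length) ∨
          3 ≤ |((i : ℕ) : ℤ) - ((j : ℕ) : ℤ)| := by
  have hq0 : (0:ℚ) < (q:ℚ) := by exact_mod_cast hq
  have hpq' : (q:ℚ) < (p:ℚ) := by exact_mod_cast hqp
  have hxgt : 1 < (p:ℚ)/(q:ℚ) := by rw [lt_div_iff₀ hq0]; linarith
  cases a with
  | nil =>
    exfalso
    have h0 : cfI ([] : List ℤ) = 0 := rfl
    rw [h0] at hacf
    linarith [hacf ▸ hxgt]
  | cons a₁ l =>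
    have hdv := dual_cf a₁ l ha
    rw [hacf] at hdv
    have hq' : (q:ℚ) ≠ 0 := ne_of_gt hq0
    have hpmq : (p:ℚ) - (q:ℚ) ≠ 0 := by linarith
    have hpq2 : (p:ℚ)/(q:ℚ) / ((p:ℚ)/(q:ℚ) - 1) = (p:ℚ)/((p:ℚ)-(q:ℚ)) := by
      rw [div_sub_one hq']
      rw [div_div_div_cancel_right₀]
      exact hq'
    have hbd : cfI b = cfI (dual (a₁ :: l)) := by
      rw [hbcf, hdv, hpq2]
    have hdual2 : ∀ x ∈ dual (a₁ :: l), 2 ≤ x := fun x hx => by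
      rcases mem_dual _ x hx with rfl | rfl <;> norm_num
    have hbe : b = dual (a₁ :: l) := cfI_unique b _ hb hdual2 hbd
    obtain ⟨hlen4, hsp, hstart⟩ := dual_spec a₁ l ha
    subst hbe
    refine ⟨hlen4, ?_, ?_⟩
    · intro x hx
      rcases mem_dual _ x hx with rfl | rfl <;> norm_num
    · intro i j hi hj
      have hi? : (dual (a₁ :: l))[(i:ℕ)]? = some 3 := by
        rw [List.getElem?_eq_getElem i.isLt]
        rw [List.get_eq_getElem] at hi
        rw [hi]
      have hj? : (dual (a₁ :: l))[(j:ℕ)]? = some 3 := by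
        rw [List.getElem?_eq_getElem j.isLt]
        rw [List.get_eq_getElem] at hj
        rw [hj]
      have key : ∀ u v : ℕ, (dual (a₁ :: l))[u]? = some 3 →
          (dual (a₁ :: l))[v]? = some 3 → u < v → u + 3 ≤ v := by
        intro u v hu hv huv
        obtain ⟨h1, h2, _⟩ := hsp u hu
        have hv1 : v ≠ u + 1 := by
          intro hc; rw [hc, h1] at hv
          exact absurd (Option.some.inj hv) (by norm_num)
        have hv2 : v ≠ u + 2 := by
          intro hc; rw [hc, h2] at hv
          exact absurd (Option.some.inj hv) (by norm_num)
        omega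
      by_cases hij : (i:ℕ) = (j:ℕ)
      · left
        obtain ⟨_, _, h3⟩ := hsp (i:ℕ) hi?
        have h4 := hstart (i:ℕ) hi?
        exact ⟨Fin.ext hij, by omega, h3⟩
      · right
        rcases lt_or_gt_of_ne hij with hlt | hgt
        · have := key _ _ hi? hj? hlt
          rw [le_abs]; right; push_cast; omega
        · have := key _ _ hj? hi? hgt
          rw [le_abs]; left; push_cast; omega
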